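/- (Lemma 1, part 1) In the secure aggregation with an oblivious server model, assuming only the correctness constraint (no security constraints needed), for every user u ∈ [K]: H(X_u | Z_u, (W_k, Z_k)_{k∈[K]\{u}}) = L. -/

import Mathlib

open Classical
open scoped BigOperators

/-- Probability of the event `E` under the probability mass function `p`
on a finite sample space `Ω`. -/
noncomputable def pr {Ω : Type*} [Fintype Ω] (p : Ω → ℝ) (E : Ω → Prop) : ℝ :=
  ∑ ω, if E ω then p ω else 0

/-- Shannon entropy of the random variable `X` in base-`q` units. -/
noncomputable def ent {Ω α : Type*} [Fintype Ω] [Fintype α] (q : ℕ) (p : Ω → ℝ)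
    (X : Ω → α) : ℝ :=
  -∑ a, pr p (fun ω => X ω = a) * Real.logb q (pr p (fun ω => X ω = a))

/-- Conditional entropy `H(X | Y) = H(X, Y) − H(Y)`, base `q`. -/
noncomputable def condEnt {Ω α β : Type*} [Fintype Ω] [Fintype α] [Fintype β]
    (q : ℕ) (p : Ω → ℝ) (X : Ω → α) (Y : Ω → β) : ℝ :=
  ent q p (fun ω => (X ω, Y ω)) - ent q p Y

/-- Mutual information `I(X ; Y) = H(X) + H(Y) − H(X, Y)`, base `q`. -/
noncomputable def mutInf {Ω α β : Type*} [Fintype Ω] [Fintype α] [Fintype β]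
    (q : ℕ) (p : Ω → ℝ) (X : Ω → α) (Y : Ω → β) : ℝ :=
  ent q p X + ent q p Y - ent q p (fun ω => (X ω, Y ω))

/-- Conditional mutual information
`I(X ; Y | Z) = H(X, Z) + H(Y, Z) − H(X, Y, Z) − H(Z)`, base `q`. -/
noncomputable def condMutInf {Ω α β γ : Type*} [Fintype Ω] [Fintype α] [Fintype β] [Fintype γ]
    (q : ℕ) (p : Ω → ℝ) (X : Ω → α) (Y : Ω → β) (Z : Ω → γ) : ℝ :=
  ent q p (fun ω => (X ω, Z ω)) + ent q p (fun ω => (Y ω, Z ω))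
    - ent q p (fun ω => (X ω, Y ω, Z ω)) - ent q p Z

section aux

variable {Ω α β : Type*} [Fintype Ω] [Fintype α] [Fintype β] {q : ℕ} {p : Ω → ℝ}

lemma pr_nonneg (hp0 : ∀ ω, 0 ≤ p ω) (E : Ω → Prop) : 0 ≤ pr p E :=
  Finset.sum_nonneg fun ω _ => by by_cases h : E ω <;> simp [pr, h, hp0 ω]

lemma pr_congr (hp0 : ∀ ω, 0 ≤ p ω) {E E' : Ω → Prop}
    (h : ∀ ω, 0 < p ω → (E ω ↔ E' ω)) : pr p E = pr p E' := by
  unfold pr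
  refine Finset.sum_congr rfl fun ω _ => ?_
  rcases (hp0 ω).lt_or_eq with h1 | h1
  · simp [h ω h1]
  · simp [← h1]

lemma pr_fiber (A : Ω → α) (E : Ω → Prop) :
    ∑ a, pr p (fun ω => A ω = a ∧ E ω) = pr p E := by
  unfold pr
  rw [Finset.sum_comm]
  refine Finset.sum_congr rfl fun ω _ => ?_
  by_cases h : E ω
  · simp only [h, and_true]
    simp [Finset.sum_ite_eq]
  · simp [h]

lemma sum_pr_eq_one (hp1 : (∑ ω, p ω) = 1) (A : Ω → α) :
    ∑ a, pr p (fun ω => A ω = a) = 1 := by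
  have := pr_fiber (p := p) A (fun _ => True)
  simpa [pr, hp1] using this

lemma le_pr {Ω : Type*} [Fintype Ω] {p : Ω → ℝ} (hp0 : ∀ ω, 0 ≤ p ω)
    {E : Ω → Prop} {ω : Ω} (hE : E ω) : p ω ≤ pr p E := by
  unfold pr
  refine le_trans ?_ (Finset.single_le_sum (f := fun ω' => if E ω' then p ω' else 0)
    (fun ω' _ => ?_) (Finset.mem_univ ω))
  · simp [hE]
  · by_cases h' : E ω' <;> simp [h', hp0 ω']

lemma ent_eq (X : Ω → α) :
    ent q p X = ∑ a, -(pr p (fun ω => X ω = a) * Real.logb q (pr p (fun ω => X ω = a))) := by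
  rw [ent]; rw [← Finset.sum_neg_distrib]

end aux

section group

variable {α : Type*} [Fintype α] {q : ℕ}

open Real

lemma grouping_le (hq : 1 < (q : ℝ)) (x : α → ℝ) (hx : ∀ a, 0 ≤ x a) :
    -((∑ a, x a) * Real.logb q (∑ a, x a)) ≤ ∑ a, -(x a * Real.logb q (x a)) := by
  have hX : ∀ a, x a ≤ ∑ b, x b := fun a =>
    Finset.single_le_sum (fun b _ => hx b) (Finset.mem_univ a)
  have key : ∀ a, -(x a * Real.logb q (∑ b, x b)) ≤ -(x a * Real.logb q (x a)) := by
    intro a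
    rcases (hx a).lt_or_eq with h | h
    · have := Real.logb_le_logb_of_le hq h (hX a)
      nlinarith
    · simp [← h]
  calc -((∑ a, x a) * Real.logb q (∑ a, x a))
      = ∑ a, -(x a * Real.logb q (∑ b, x b)) := by
        rw [Finset.sum_neg_distrib, ← Finset.sum_mul]
    _ ≤ ∑ a, -(x a * Real.logb q (x a)) := Finset.sum_le_sum fun a _ => key a

lemma grouping_eq (hq : 1 < (q : ℝ)) (x : α → ℝ) (hx : ∀ a, 0 ≤ x a)
    (h : ∑ a, -(x a * Real.logb q (x a)) = -((∑ a, x a) * Real.logb q (∑ a, x a))) :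
    ∀ a, x a = 0 ∨ x a = ∑ b, x b := by
  have hX : ∀ a, x a ≤ ∑ b, x b := fun a =>
    Finset.single_le_sum (fun b _ => hx b) (Finset.mem_univ a)
  set X := ∑ b, x b with hXdef
  have key : ∀ a, 0 ≤ -(x a * Real.logb q (x a)) - -(x a * Real.logb q X) := by
    intro a
    rcases (hx a).lt_or_eq with hlt | heq
    · have := Real.logb_le_logb_of_le hq hlt (hX a)
      nlinarith
    · simp [← heq]
  have hsum : ∑ a, (-(x a * Real.logb q (x a)) - -(x a * Real.logb q X)) = 0 := by
    rw [Finset.sum_sub_distrib, h]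
    have : ∑ a, -(x a * Real.logb q X) = -(X * Real.logb q X) := by
      rw [Finset.sum_neg_distrib, ← Finset.sum_mul, hXdef]
    rw [this]; ring
  have hzero := (Finset.sum_eq_zero_iff_of_nonneg (fun a _ => key a)).1 hsum
  intro a
  have ha := hzero a (Finset.mem_univ a)
  rcases (hx a).lt_or_eq with hlt | heq
  · right
    have hlogeq : Real.logb q (x a) = Real.logb q X := by
      have : x a * (Real.logb q X - Real.logb q (x a)) = 0 := by linarith
      rcases mul_eq_zero.1 this with h' | h'
      · exact absurd h' hlt.ne'
      · linarith
    exact Real.logb_injOn_pos hq (Set.mem_Ioi.2 hlt)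
      (Set.mem_Ioi.2 (lt_of_lt_of_le hlt (hX a))) hlogeq
  · exact Or.inl heq.symm

end group

section main

variable {Ω α β : Type*} [Fintype Ω] [Fintype α] [Fintype β] {q : ℕ} {p : Ω → ℝ}

lemma ent_comp_le (hq : 1 < (q : ℝ)) (hp0 : ∀ ω, 0 ≤ p ω)
    {A : Ω → α} {B : Ω → β} (f : β → α)
    (h : ∀ ω, 0 < p ω → A ω = f (B ω)) :
    ent q p A ≤ ent q p B := by
  rw [ent_eq, ent_eq]
  -- decompose pr (A = a) via fibers of f
  have ht : ∀ a b, pr p (fun ω => A ω = a ∧ B ω = b)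
      = if f b = a then pr p (fun ω => B ω = b) else 0 := by
    intro a b
    have : pr p (fun ω => A ω = a ∧ B ω = b)
        = pr p (fun ω => f b = a ∧ B ω = b) := by
      apply pr_congr hp0
      intro ω hω
      constructor
      · rintro ⟨h1, h2⟩; exact ⟨h2 ▸ (h ω hω ▸ h1), h2⟩
      · rintro ⟨h1, h2⟩; exact ⟨by rw [h ω hω, h2, h1], h2⟩
    rw [this]
    by_cases hfb : f b = a
    · simp [pr, hfb]
    · simp [pr, hfb]
  have hA : ∀ a, pr p (fun ω => A ω = a)
      = ∑ b, (if f b = a then pr p (fun ω => B ω = b) else 0) := by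
    intro a
    rw [← pr_fiber (p := p) B (fun ω => A ω = a)]
    refine Finset.sum_congr rfl fun b _ => ?_
    rw [← ht a b]
    apply pr_congr hp0
    intro ω _; exact ⟨fun ⟨h1, h2⟩ => ⟨h2, h1⟩, fun ⟨h1, h2⟩ => ⟨h2, h1⟩⟩
  calc ∑ a, -(pr p (fun ω => A ω = a) * Real.logb q (pr p (fun ω => A ω = a)))
      ≤ ∑ a, ∑ b, -((if f b = a then pr p (fun ω => B ω = b) else 0)
          * Real.logb q (if f b = a then pr p (fun ω => B ω = b) else 0)) := by
        refine Finset.sum_le_sum fun a _ => ?_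
        rw [hA a]
        exact grouping_le hq _ (fun b => by
          by_cases hfb : f b = a <;> simp [hfb, pr_nonneg hp0])
    _ = ∑ b, -(pr p (fun ω => B ω = b) * Real.logb q (pr p (fun ω => B ω = b))) := by
        rw [Finset.sum_comm]
        refine Finset.sum_congr rfl fun b _ => ?_
        rw [Finset.sum_eq_single (f b)]
        · simp
        · intro a _ ha; simp [Ne.symm ha]
        · simp

lemma exists_fun_of_condEnt_zero (hq : 1 < (q : ℝ)) (hp0 : ∀ ω, 0 ≤ p ω)
    (hp1 : (∑ ω, p ω) = 1) {A : Ω → α} {B : Ω → β}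
    (h : condEnt q p A B = 0) :
    ∃ g : β → α, ∀ ω, 0 < p ω → A ω = g (B ω) := by
  have hΩ : Nonempty Ω := by
    by_contra hne
    rw [not_nonempty_iff] at hne
    simp [Finset.sum_eq_zero] at hp1
  have hα : Nonempty α := ⟨A hΩ.some⟩
  set t : α → β → ℝ := fun a b => pr p (fun ω => A ω = a ∧ B ω = b) with htdef
  set y : β → ℝ := fun b => pr p (fun ω => B ω = b) with hydef
  have htn : ∀ a b, 0 ≤ t a b := fun a b => pr_nonneg hp0 _
  have hty : ∀ b, ∑ a, t a b = y b := fun b => pr_fiber A _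
  -- joint entropy as double sum
  have hAB : ∀ ab : α × β, pr p (fun ω => (A ω, B ω) = ab) = t ab.1 ab.2 := by
    intro ab
    apply pr_congr hp0
    intro ω _
    constructor
    · intro h'; exact ⟨congrArg Prod.fst h', congrArg Prod.snd h'⟩
    · rintro ⟨h1, h2⟩; exact Prod.ext h1 h2
  have hent : ent q p (fun ω => (A ω, B ω))
      = ∑ b, ∑ a, -(t a b * Real.logb q (t a b)) := by
    rw [ent_eq]
    have : ∀ ab : α × β, -(pr p (fun ω => (A ω, B ω) = ab)
        * Real.logb q (pr p (fun ω => (A ω, B ω) = ab)))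
        = -(t ab.1 ab.2 * Real.logb q (t ab.1 ab.2)) := fun ab => by rw [hAB ab]
    rw [Finset.sum_congr rfl (fun ab _ => this ab), Fintype.sum_prod_type, Finset.sum_comm]
  have hgap : ∀ b, -((∑ a, t a b) * Real.logb q (∑ a, t a b))
      ≤ ∑ a, -(t a b * Real.logb q (t a b)) :=
    fun b => grouping_le hq _ (fun a => htn a b)
  have hsum0 : ∑ b, (∑ a, -(t a b * Real.logb q (t a b))
      - -((∑ a, t a b) * Real.logb q (∑ a, t a b))) = 0 := by
    have hBent : ent q p B = ∑ b, -((∑ a, t a b) * Real.logb q (∑ a, t a b)) := by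
      rw [ent_eq]
      refine Finset.sum_congr rfl fun b _ => ?_
      rw [hty b]
    rw [Finset.sum_sub_distrib, ← hent, ← hBent]
    rw [condEnt] at h
    linarith
  have hzero : ∀ b, ∑ a, -(t a b * Real.logb q (t a b))
      = -((∑ a, t a b) * Real.logb q (∑ a, t a b)) := by
    intro b
    have := (Finset.sum_eq_zero_iff_of_nonneg
      (fun b _ => sub_nonneg.2 (hgap b))).1 hsum0 b (Finset.mem_univ b)
    linarith [sub_eq_zero.1 this]
  have hdich : ∀ a b, t a b = 0 ∨ t a b = ∑ a', t a' b :=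
    fun a b => grouping_eq hq _ (fun a' => htn a' b) (hzero b) a
  refine ⟨fun b => if hb : ∃ a, 0 < t a b then hb.choose else hα.some, ?_⟩
  intro ω hω
  have hta0 : 0 < t (A ω) (B ω) := by
    have hle : p ω ≤ t (A ω) (B ω) := le_pr hp0 ⟨rfl, rfl⟩
    linarith
  have hb : ∃ a, 0 < t a (B ω) := ⟨A ω, hta0⟩
  simp only [dif_pos hb]
  by_contra hne
  have ht1 : 0 < t hb.choose (B ω) := hb.choose_spec
  have hsum_ge : t (A ω) (B ω) + t hb.choose (B ω) ≤ ∑ a, t a (B ω) := by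
    have : ({A ω, hb.choose} : Finset α) ⊆ Finset.univ := Finset.subset_univ _
    calc t (A ω) (B ω) + t hb.choose (B ω)
        = ∑ a ∈ ({A ω, hb.choose} : Finset α), t a (B ω) := by
          rw [Finset.sum_pair hne]
      _ ≤ ∑ a, t a (B ω) := Finset.sum_le_sum_of_subset_of_nonneg this
          (fun a _ _ => htn a (B ω))
  have h0 : t (A ω) (B ω) = ∑ a, t a (B ω) :=
    (hdich (A ω) (B ω)).resolve_left hta0.ne'
  have h1 : t hb.choose (B ω) = ∑ a, t a (B ω) :=
    (hdich hb.choose (B ω)).resolve_left ht1.ne'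
  linarith

lemma condEnt_eq_of_const (hq : 1 < (q : ℝ)) (hp0 : ∀ ω, 0 ≤ p ω)
    (hp1 : (∑ ω, p ω) = 1) {A : Ω → α} {B : Ω → β} [Nonempty α]
    (h : ∀ a a' b, pr p (fun ω => A ω = a ∧ B ω = b)
      = pr p (fun ω => A ω = a' ∧ B ω = b)) :
    condEnt q p A B = Real.logb q (Fintype.card α) := by
  set N : ℝ := (Fintype.card α : ℝ) with hN
  have hN0 : 0 < N := by
    rw [hN]; exact_mod_cast Fintype.card_pos
  set t : α → β → ℝ := fun a b => pr p (fun ω => A ω = a ∧ B ω = b) with htdef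
  set y : β → ℝ := fun b => pr p (fun ω => B ω = b) with hydef
  have hty : ∀ b, ∑ a, t a b = y b := fun b => pr_fiber A _
  have htval : ∀ a b, t a b = y b / N := by
    intro a b
    have : ∑ a', t a' b = N * t a b := by
      rw [Finset.sum_congr rfl (fun a' _ => h a' a b)]
      simp [hN, mul_comm]
      rfl
    field_simp
    rw [← hty b, this]
    ring
  have hAB : ∀ ab : α × β, pr p (fun ω => (A ω, B ω) = ab) = t ab.1 ab.2 := by
    intro ab
    apply pr_congr hp0
    intro ω _
    constructor
    · intro h'; exact ⟨congrArg Prod.fst h', congrArg Prod.snd h'⟩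
    · rintro ⟨h1, h2⟩; exact Prod.ext h1 h2
  have hyn : ∀ b, 0 ≤ y b := fun b => pr_nonneg hp0 _
  have hent : ent q p (fun ω => (A ω, B ω))
      = ent q p B + Real.logb q N := by
    have hterm : ∀ b, ∑ a, -(t a b * Real.logb q (t a b))
        = -(y b * Real.logb q (y b)) + y b * Real.logb q N := by
      intro b
      rcases (hyn b).lt_or_eq with hy | hy
      · have hlog : Real.logb q (y b / N) = Real.logb q (y b) - Real.logb q N :=
          Real.logb_div hy.ne' hN0.ne'
        rw [Finset.sum_congr rfl (fun a _ => by rw [htval a b, hlog])]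
        rw [Finset.sum_const, Finset.card_univ]
        rw [hN]
        push_cast
        field_simp
        simp [show (Fintype.card α : ℝ) ≠ 0 from Nat.cast_ne_zero.2 Fintype.card_ne_zero]
        rw [mul_div_assoc', mul_div_cancel_left₀ _ (Nat.cast_ne_zero.2 Fintype.card_ne_zero)]
        ring
      · rw [Finset.sum_congr rfl (fun a _ => by rw [htval a b, ← hy])]
        simp [← hy]
    calc ent q p (fun ω => (A ω, B ω))
        = ∑ b, ∑ a, -(t a b * Real.logb q (t a b)) := by
          rw [ent_eq]
          have : ∀ ab : α × β, -(pr p (fun ω => (A ω, B ω) = ab)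
              * Real.logb q (pr p (fun ω => (A ω, B ω) = ab)))
              = -(t ab.1 ab.2 * Real.logb q (t ab.1 ab.2)) := fun ab => by rw [hAB ab]
          rw [Finset.sum_congr rfl (fun ab _ => this ab), Fintype.sum_prod_type,
            Finset.sum_comm]
      _ = ∑ b, (-(y b * Real.logb q (y b)) + y b * Real.logb q N) :=
          Finset.sum_congr rfl (fun b _ => hterm b)
      _ = ent q p B + (∑ b, y b) * Real.logb q N := by
          rw [Finset.sum_add_distrib, ent_eq, ← Finset.sum_mul]
      _ = ent q p B + Real.logb q N := by
          rw [sum_pr_eq_one hp1 B]; ring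
  rw [condEnt, hent]; ring

end main

lemma sum_split {K : ℕ} {M : Type*} [AddCommMonoid M] (f : Fin K → M) (u : Fin K) :
    ∑ v, f v = f u + ∑ j : {j : Fin K // j ≠ u}, f j.1 := by
  have h1 : ∑ j : {j : Fin K // j ≠ u}, f j.1
      = ∑ j ∈ Finset.univ.erase u, f j := by
    rw [← Finset.sum_subtype (p := fun j => j ≠ u) (Finset.univ.erase u) (by simp) f]
  rw [h1, Finset.add_sum_erase _ f (Finset.mem_univ u)]


/-- **Lemma 1, part 1.** In the secure aggregation with an oblivious server model,
assuming only the correctness constraint, for every user `u`: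
`H(X_u | Z_u, (W_k, Z_k)_{k ≠ u}) = L` (entropies in q-ary units, q = |F|). -/
theorem lemma1_part1
    (F : Type) [Field F] [Fintype F]
    (K L LX LY : ℕ) (hK : 2 ≤ K) (hL : 1 ≤ L)
    (Ω : Type) [Fintype Ω] (p : Ω → ℝ)
    (hp0 : ∀ ω, 0 ≤ p ω) (hp1 : (∑ ω, p ω) = 1)
    (ZT : Fin K → Type) [∀ k, Fintype (ZT k)]
    (W : Fin K → Ω → Fin L → F)
    (Z : (k : Fin K) → Ω → ZT k)
    (X : Fin K → Ω → Fin LX → F)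
    (Y : Fin K → Ω → Fin LY → F)
    -- inputs i.i.d. uniform on F^L and independent of the keys
    (hWZ : ∀ (w : Fin K → Fin L → F) (z : (k : Fin K) → ZT k),
      pr p (fun ω => (∀ k, W k ω = w k) ∧ (∀ k, Z k ω = z k))
        = (1 / (Fintype.card F : ℝ) ^ L) ^ K * pr p (fun ω => ∀ k, Z k ω = z k))
    -- deterministic encoders X_k = φ_k(W_k, Z_k)
    (hX : ∀ k, ∃ φ : (Fin L → F) → ZT k → Fin LX → F, ∀ ω, X k ω = φ (W k ω) (Z k ω))
    -- deterministic server maps Y_k = ψ_k(X_1, …, X_K)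
    (hY : ∀ k, ∃ ψ : (Fin K → Fin LX → F) → Fin LY → F, ∀ ω, Y k ω = ψ (fun u => X u ω))
    -- correctness: H(Σ_u W_u | Y_k, W_k, Z_k) = 0
    (hCorr : ∀ k, condEnt (Fintype.card F) p (fun ω => ∑ u, W u ω)
        (fun ω => (Y k ω, W k ω, Z k ω)) = 0) :
    ∀ u : Fin K,
      condEnt (Fintype.card F) p (X u)
        (fun ω => (Z u ω, fun k : {k : Fin K // k ≠ u} => (W k.1 ω, Z k.1 ω)))
        = (L : ℝ) := by
  intro u
  have hq : 1 < ((Fintype.card F : ℕ) : ℝ) := by exact_mod_cast Fintype.one_lt_card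
  choose φ hφ using hX
  choose ψ hψ using hY
  obtain ⟨k, hk⟩ : ∃ k : Fin K, k ≠ u := by
    have : 1 < Fintype.card (Fin K) := by
      simpa using lt_of_lt_of_le one_lt_two hK
    exact Fintype.exists_ne_of_one_lt_card this u
  obtain ⟨s, hs⟩ := exists_fun_of_condEnt_zero hq hp0 hp1 (hCorr k)
  set C : Ω → ZT u × ((j : {j : Fin K // j ≠ u}) → (Fin L → F) × ZT j.1) :=
    fun ω => (Z u ω, fun j => (W j.1 ω, Z j.1 ω)) with hCdef
  show condEnt (Fintype.card F) p (X u) C = (L : ℝ)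
  -- Claim 1 : joint entropies agree
  have hjoint : ent (Fintype.card F) p (fun ω => (X u ω, C ω))
      = ent (Fintype.card F) p (fun ω => (W u ω, C ω)) := by
    apply le_antisymm
    · apply ent_comp_le hq hp0
        (f := fun wc : (Fin L → F) × (ZT u × ((j : {j : Fin K // j ≠ u}) → (Fin L → F) × ZT j.1)) =>
          (φ u wc.1 wc.2.1, wc.2))
      intro ω _
      simp only [hCdef]
      rw [hφ u ω]
    · apply ent_comp_le hq hp0
        (f := fun xc : (Fin LX → F) × (ZT u × ((j : {j : Fin K // j ≠ u}) → (Fin L → F) × ZT j.1)) =>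
          (s (ψ k (fun j => if h : j = u then xc.1
                else φ j (xc.2.2 ⟨j, h⟩).1 (xc.2.2 ⟨j, h⟩).2),
              (xc.2.2 ⟨k, hk⟩).1, (xc.2.2 ⟨k, hk⟩).2)
            - ∑ j : {j : Fin K // j ≠ u}, (xc.2.2 j).1, xc.2))
      intro ω hω
      have hXall : (fun j => if h : j = u then X u ω
          else φ j ((C ω).2 ⟨j, h⟩).1 ((C ω).2 ⟨j, h⟩).2) = fun j => X j ω := by
        funext j
        by_cases h : j = u
        · subst h; simp
        · simp only [dif_neg h, hCdef]
          exact (hφ j ω).symm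
      have h1 : s (ψ k (fun j => if h : j = u then X u ω
            else φ j ((C ω).2 ⟨j, h⟩).1 ((C ω).2 ⟨j, h⟩).2),
            ((C ω).2 ⟨k, hk⟩).1, ((C ω).2 ⟨k, hk⟩).2) = ∑ v, W v ω := by
        rw [hXall]
        simp only [hCdef]
        rw [← hψ k ω]
        exact (hs ω hω).symm
      refine Prod.ext ?_ rfl
      show W u ω = _
      rw [h1]
      simp only [hCdef]
      rw [sum_split (fun v => W v ω) u]
      abel
  -- Claim 2 : uniform conditional distribution of W u given C
  have hunif : ∀ (a a' : Fin L → F) b, pr p (fun ω => W u ω = a ∧ C ω = b)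
      = pr p (fun ω => W u ω = a' ∧ C ω = b) := by
    intro a a' b
    set z' : ∀ j, ZT j := fun j => if h : j = u then h.symm ▸ b.1 else (b.2 ⟨j, h⟩).2 with hz'
    have key : ∀ (wu : Fin L → F),
        pr p (fun ω => W u ω = wu ∧ C ω = b)
        = (1 / (Fintype.card F : ℝ) ^ L) ^ K * pr p (fun ω => ∀ j, Z j ω = z' j) := by
      intro wu
      set w' : Fin K → Fin L → F := fun j => if h : j = u then wu else (b.2 ⟨j, h⟩).1 with hw'
      have hiff : ∀ ω, 0 < p ω →
          ((W u ω = wu ∧ C ω = b) ↔ ((∀ j, W j ω = w' j) ∧ (∀ j, Z j ω = z' j))) := by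
        intro ω _
        constructor
        · rintro ⟨hWu, hCb⟩
          have hZu : Z u ω = b.1 := congrArg Prod.fst hCb
          have hrest : ∀ j : {j : Fin K // j ≠ u},
              (W j.1 ω, Z j.1 ω) = b.2 j := fun j =>
            congrFun (congrArg Prod.snd hCb) j
          constructor
          · intro j
            by_cases h : j = u
            · subst h; simpa [hw'] using hWu
            · rw [hw']
              simp only [dif_neg h]
              exact congrArg Prod.fst (hrest ⟨j, h⟩)
          · intro j
            by_cases h : j = u
            · subst h; simpa [hz'] using hZu
            · rw [hz']
              simp only [dif_neg h]
              exact congrArg Prod.snd (hrest ⟨j, h⟩)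
        · rintro ⟨hW, hZ⟩
          constructor
          · have := hW u
            simpa [hw'] using this
          · refine Prod.ext ?_ ?_
            · have := hZ u
              simpa [hz'] using this
            · funext j
              refine Prod.ext ?_ ?_
              · have := hW j.1
                rw [hw'] at this
                simp only [dif_neg j.2] at this
                simpa using this
              · have := hZ j.1
                rw [hz'] at this
                simp only [dif_neg j.2] at this
                simpa using this
      rw [pr_congr hp0 hiff, hWZ w' z']
    rw [key a, key a']
  have hcond := condEnt_eq_of_const (q := Fintype.card F) hq hp0 hp1 hunif
  have hfinal : condEnt (Fintype.card F) p (X u) C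
      = condEnt (Fintype.card F) p (W u) C := by
    unfold condEnt
    rw [hjoint]
  rw [hfinal, hcond]
  rw [Fintype.card_fun, Fintype.card_fin]
  push_cast
  rw [Real.logb_pow, Real.logb_self_eq_one hq]
  ring
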